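/- Fix μ ≠ 0. A continuously differentiable covector field A : ℝ⁴ → ℝ⁴ satisfies the invariance conditions L_ξA = 0 for ξ = e₁, ξ = e₃ and ξ = e₁₃ + μe₄ = (x³, 0, −x¹, μ) if and only if there exist continuously differentiable functions C₁, C₂, f, g : ℝ → ℝ such that for all x: A₁(x) = C₁(x²)·sin(x⁴/μ) + C₂(x²)·cos(x⁴/μ), A₃(x) = C₁(x²)·cos(x⁴/μ) − C₂(x²)·sin(x⁴/μ), A₂(x) = f(x²) and A₄(x) = g(x²). (This is the class P₍₃,₃₎, elliptic helices with a time-like axis together with translations in the plane Ox¹x³.) -/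

import Mathlib

open Real

/-- Partial derivative of a scalar function on ℝ⁴ in the j-th coordinate direction. -/
noncomputable def pd (j : Fin 4) (f : (Fin 4 → ℝ) → ℝ) (x : Fin 4 → ℝ) : ℝ :=
  fderiv ℝ f x (Pi.single j 1)

/-- The i-th component of the Lie derivative of the covector field A along
the vector field ξ at the point x:  Σ_j ξ^j ∂_j A_i + Σ_j A_j ∂_i ξ^j. -/
noncomputable def lieCov (ξ A : (Fin 4 → ℝ) → Fin 4 → ℝ) (x : Fin 4 → ℝ) (i : Fin 4) : ℝ :=
  (∑ j : Fin 4, ξ x j * pd j (fun y => A y i) x)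
    + ∑ j : Fin 4, A x j * pd i (fun y => ξ y j) x

/-- Invariance condition L_ξ A = 0 on all of ℝ⁴. -/
def PInvariant (ξ A : (Fin 4 → ℝ) → Fin 4 → ℝ) : Prop :=
  ∀ x i, lieCov ξ A x i = 0

/-- Invariance condition L_ξ A = 0 on a set M. -/
def PInvariantOn (ξ A : (Fin 4 → ℝ) → Fin 4 → ℝ) (M : Set (Fin 4 → ℝ)) : Prop :=
  ∀ x ∈ M, ∀ i, lieCov ξ A x i = 0

def e1 : (Fin 4 → ℝ) → Fin 4 → ℝ := fun _ => ![1, 0, 0, 0]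
def e2 : (Fin 4 → ℝ) → Fin 4 → ℝ := fun _ => ![0, 1, 0, 0]
def e3 : (Fin 4 → ℝ) → Fin 4 → ℝ := fun _ => ![0, 0, 1, 0]
def e4 : (Fin 4 → ℝ) → Fin 4 → ℝ := fun _ => ![0, 0, 0, 1]
def e12 : (Fin 4 → ℝ) → Fin 4 → ℝ := fun x => ![-x 1, x 0, 0, 0]
def e13 : (Fin 4 → ℝ) → Fin 4 → ℝ := fun x => ![x 2, 0, -x 0, 0]
def e23 : (Fin 4 → ℝ) → Fin 4 → ℝ := fun x => ![0, -x 2, x 1, 0]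
def e14 : (Fin 4 → ℝ) → Fin 4 → ℝ := fun x => ![x 3, 0, 0, x 0]
def e24 : (Fin 4 → ℝ) → Fin 4 → ℝ := fun x => ![0, x 3, 0, x 1]
def e34 : (Fin 4 → ℝ) → Fin 4 → ℝ := fun x => ![0, 0, x 3, x 2]


section AuxP33

lemma hasDerivAt_pd (f : (Fin 4 → ℝ) → ℝ) (hf : Differentiable ℝ f)
    (x : Fin 4 → ℝ) (j : Fin 4) (t : ℝ) :
    HasDerivAt (fun s => f (Function.update x j s)) (pd j f (Function.update x j t)) t :=
  (hf (Function.update x j t)).hasFDerivAt.comp_hasDerivAt t (hasDerivAt_update x j t)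

lemma pd_of_hasDerivAt {f : (Fin 4 → ℝ) → ℝ} (hf : Differentiable ℝ f) {x : Fin 4 → ℝ}
    {j : Fin 4} {d : ℝ} (h : HasDerivAt (fun τ => f (Function.update x j τ)) d (x j)) :
    pd j f x = d := by
  have h2 := hasDerivAt_pd f hf x j (x j)
  rw [Function.update_eq_self] at h2
  exact h2.unique h

lemma pd_const (i : Fin 4) (c : ℝ) (x : Fin 4 → ℝ) : pd i (fun _ => c) x = 0 := by simp [pd]

lemma pd_proj (i k : Fin 4) (x : Fin 4 → ℝ) :
    pd i (fun y => y k) x = (Pi.single i 1 : Fin 4 → ℝ) k := by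
  have h : HasFDerivAt (fun y : Fin 4 → ℝ => y k)
      (ContinuousLinearMap.proj k : (Fin 4 → ℝ) →L[ℝ] ℝ) x :=
    (ContinuousLinearMap.proj k : (Fin 4 → ℝ) →L[ℝ] ℝ).hasFDerivAt
  rw [pd, h.fderiv]; rfl

lemma pd_neg_proj (i k : Fin 4) (x : Fin 4 → ℝ) :
    pd i (fun y => -y k) x = -(Pi.single i 1 : Fin 4 → ℝ) k := by
  have h : HasFDerivAt (fun y : Fin 4 → ℝ => -y k)
      (-(ContinuousLinearMap.proj k : (Fin 4 → ℝ) →L[ℝ] ℝ)) x :=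
    (ContinuousLinearMap.proj k : (Fin 4 → ℝ) →L[ℝ] ℝ).hasFDerivAt.neg
  rw [pd, h.fderiv]; rfl

lemma const_of_pd_zero (A : (Fin 4 → ℝ) → Fin 4 → ℝ) (i : Fin 4)
    (hAi : Differentiable ℝ fun y => A y i) (j : Fin 4)
    (h : ∀ y, pd j (fun y => A y i) y = 0) (x : Fin 4 → ℝ) (s : ℝ) :
    A (Function.update x j s) i = A x i := by
  have hdiff : Differentiable ℝ (fun t => A (Function.update x j t) i) :=
    fun t => (hasDerivAt_pd _ hAi x j t).differentiableAt
  have hz : ∀ t, deriv (fun t => A (Function.update x j t) i) t = 0 := fun t => by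
    rw [(hasDerivAt_pd _ hAi x j t).deriv]; exact h _
  have := is_const_of_deriv_eq_zero hdiff hz s (x j)
  simpa [Function.update_eq_self] using this

end AuxP33

/-- Class P_{3,3}: elliptic helices with a time-like axis and translations in Ox¹x³. -/
theorem class_P33 (μ : ℝ) (hμ : μ ≠ 0)
    (A : (Fin 4 → ℝ) → Fin 4 → ℝ) (hA : ContDiff ℝ 1 A) :
    (PInvariant e1 A ∧ PInvariant e3 A ∧
      PInvariant (fun x => ![x 2, 0, -x 0, μ]) A) ↔
      ∃ C1 C2 f g : ℝ → ℝ, ContDiff ℝ 1 C1 ∧ ContDiff ℝ 1 C2 ∧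
        ContDiff ℝ 1 f ∧ ContDiff ℝ 1 g ∧
        ∀ x, A x 0 = C1 (x 1) * sin (x 3 / μ) + C2 (x 1) * cos (x 3 / μ) ∧
          A x 2 = C1 (x 1) * cos (x 3 / μ) - C2 (x 1) * sin (x 3 / μ) ∧
          A x 1 = f (x 1) ∧ A x 3 = g (x 1) := by
  have hAd : ∀ i, Differentiable ℝ fun y => A y i :=
    fun i => (contDiff_pi.mp hA i).differentiable one_ne_zero
  have hsin : ∀ τ : ℝ, HasDerivAt (fun τ : ℝ => sin (τ / μ)) (cos (τ / μ) * (1 / μ)) τ :=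
    fun τ => (Real.hasDerivAt_sin _).comp _ ((hasDerivAt_id _).div_const μ)
  have hcos : ∀ τ : ℝ, HasDerivAt (fun τ : ℝ => cos (τ / μ)) (-sin (τ / μ) * (1 / μ)) τ :=
    fun τ => (Real.hasDerivAt_cos _).comp _ ((hasDerivAt_id _).div_const μ)
  constructor
  · rintro ⟨h1, h3, hx⟩
    have h0 : ∀ x i, pd 0 (fun y => A y i) x = 0 := fun x i => by
      have := h1 x i
      simpa [lieCov, e1, Fin.sum_univ_four, pd_const] using this
    have h2 : ∀ x i, pd 2 (fun y => A y i) x = 0 := fun x i => by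
      have := h3 x i
      simpa [lieCov, e3, Fin.sum_univ_four, pd_const] using this
    have E0 : ∀ x, μ * pd 3 (fun y => A y 0) x = A x 2 := fun x => by
      have h := hx x 0
      simp [lieCov, Fin.sum_univ_four, pd_const, pd_proj, pd_neg_proj, h0, h2,
        Pi.single_apply] at h
      linarith
    have E2 : ∀ x, μ * pd 3 (fun y => A y 2) x = -(A x 0) := fun x => by
      have h := hx x 2
      simp [lieCov, Fin.sum_univ_four, pd_const, pd_proj, pd_neg_proj, h0, h2,
        Pi.single_apply] at h
      linarith
    have E1 : ∀ x, pd 3 (fun y => A y 1) x = 0 := fun x => by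
      have h := hx x 1
      simp [lieCov, Fin.sum_univ_four, pd_const, pd_proj, pd_neg_proj, h0, h2,
        Pi.single_apply] at h
      rcases h with h | h
      · exact absurd h hμ
      · exact h
    have E3 : ∀ x, pd 3 (fun y => A y 3) x = 0 := fun x => by
      have h := hx x 3
      simp [lieCov, Fin.sum_univ_four, pd_const, pd_proj, pd_neg_proj, h0, h2,
        Pi.single_apply] at h
      rcases h with h | h
      · exact absurd h hμ
      · exact h
    set p : ℝ → (Fin 4 → ℝ) := fun s => ![0, s, 0, 0] with hp
    have hpc : ContDiff ℝ 1 p := by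
      apply contDiff_pi.mpr
      intro i
      fin_cases i
      · exact contDiff_const
      · exact contDiff_id
      · exact contDiff_const
      · exact contDiff_const
    refine ⟨fun s => A (p s) 2, fun s => A (p s) 0, fun s => A (p s) 1, fun s => A (p s) 3,
      (contDiff_pi.mp hA 2).comp hpc, (contDiff_pi.mp hA 0).comp hpc,
      (contDiff_pi.mp hA 1).comp hpc, (contDiff_pi.mp hA 3).comp hpc, fun x => ?_⟩
    have key : ∀ i, A x i = A (Function.update (p (x 1)) 3 (x 3)) i := by
      intro i
      have e1' := const_of_pd_zero A i (hAd i) 0 (fun y => h0 y i) x 0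
      have e2' := const_of_pd_zero A i (hAd i) 2 (fun y => h2 y i)
        (Function.update x 0 0) 0
      have hx' : Function.update (Function.update x 0 0) 2 0
          = Function.update (p (x 1)) 3 (x 3) := by
        funext k; fin_cases k <;> simp [Function.update_apply, hp]
      rw [← hx', e2', e1']
    set s := x 1 with hs
    set q : ℝ → (Fin 4 → ℝ) := fun τ => Function.update (p s) 3 τ with hq
    have hq0 : q 0 = p s := by
      funext k; fin_cases k <;> simp [hq, Function.update_apply, hp]
    have ha' : ∀ τ, HasDerivAt (fun τ => A (q τ) 0) (A (q τ) 2 / μ) τ := fun τ => by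
      have h := hasDerivAt_pd (fun y => A y 0) (hAd 0) (p s) 3 τ
      have hv : pd 3 (fun y => A y 0) (Function.update (p s) 3 τ) = A (q τ) 2 / μ := by
        rw [eq_div_iff hμ, mul_comm]; exact E0 _
      rw [hv] at h; exact h
    have hc' : ∀ τ, HasDerivAt (fun τ => A (q τ) 2) (-(A (q τ) 0) / μ) τ := fun τ => by
      have h := hasDerivAt_pd (fun y => A y 2) (hAd 2) (p s) 3 τ
      have hv : pd 3 (fun y => A y 2) (Function.update (p s) 3 τ) = -(A (q τ) 0) / μ := by
        rw [eq_div_iff hμ, mul_comm]; exact E2 _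
      rw [hv] at h; exact h
    have hu : ∀ τ, HasDerivAt
        (fun τ => A (q τ) 0 * cos (τ / μ) - A (q τ) 2 * sin (τ / μ)) 0 τ := fun τ => by
      have h := ((ha' τ).mul (hcos τ)).sub ((hc' τ).mul (hsin τ))
      exact h.congr_deriv (by ring)
    have hv : ∀ τ, HasDerivAt
        (fun τ => A (q τ) 0 * sin (τ / μ) + A (q τ) 2 * cos (τ / μ)) 0 τ := fun τ => by
      have h := ((ha' τ).mul (hsin τ)).add ((hc' τ).mul (hcos τ))
      exact h.congr_deriv (by ring)
    have hu0 := is_const_of_deriv_eq_zero (fun τ => (hu τ).differentiableAt)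
      (fun τ => (hu τ).deriv) (x 3) 0
    have hv0 := is_const_of_deriv_eq_zero (fun τ => (hv τ).differentiableAt)
      (fun τ => (hv τ).deriv) (x 3) 0
    simp only [hq0, Real.sin_zero, Real.cos_zero, zero_div, mul_one, mul_zero, sub_zero,
      add_zero, zero_mul] at hu0 hv0
    have hpyth := Real.sin_sq_add_cos_sq (x 3 / μ)
    refine ⟨?_, ?_, ?_, ?_⟩
    · rw [key 0]
      show A (q (x 3)) 0 = A (p s) 2 * sin (x 3 / μ) + A (p s) 0 * cos (x 3 / μ)
      linear_combination sin (x 3 / μ) * hv0 + cos (x 3 / μ) * hu0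
        - A (q (x 3)) 0 * hpyth
    · rw [key 2]
      show A (q (x 3)) 2 = A (p s) 2 * cos (x 3 / μ) - A (p s) 0 * sin (x 3 / μ)
      linear_combination cos (x 3 / μ) * hv0 - sin (x 3 / μ) * hu0
        - A (q (x 3)) 2 * hpyth
    · rw [key 1]
      show A (q (x 3)) 1 = A (p s) 1
      rw [hq]
      exact const_of_pd_zero A 1 (hAd 1) 3 (fun y => E1 y) (p s) (x 3)
    · rw [key 3]
      show A (q (x 3)) 3 = A (p s) 3
      rw [hq]
      exact const_of_pd_zero A 3 (hAd 3) 3 (fun y => E3 y) (p s) (x 3)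
  · rintro ⟨C1, C2, f, g, _, _, _, _, hform⟩
    have hco : ∀ (x y : Fin 4 → ℝ), y 1 = x 1 → y 3 = x 3 → ∀ i, A y i = A x i := by
      intro x y h1 h3 i
      obtain ⟨a0, a2, a1, a3⟩ := hform y
      obtain ⟨b0, b2, b1, b3⟩ := hform x
      fin_cases i
      · show A y 0 = A x 0
        rw [a0, b0, h1, h3]
      · show A y 1 = A x 1
        rw [a1, b1, h1]
      · show A y 2 = A x 2
        rw [a2, b2, h1, h3]
      · show A y 3 = A x 3
        rw [a3, b3, h1]
    have hpd0 : ∀ x i, pd 0 (fun y => A y i) x = 0 := fun x i => by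
      refine pd_of_hasDerivAt (hAd i) ?_
      have he : (fun τ => A (Function.update x 0 τ) i) = fun _ => A x i := by
        funext τ
        exact hco x _ (by simp [Function.update_apply]) (by simp [Function.update_apply]) i
      rw [he]; exact hasDerivAt_const _ _
    have hpd2 : ∀ x i, pd 2 (fun y => A y i) x = 0 := fun x i => by
      refine pd_of_hasDerivAt (hAd i) ?_
      have he : (fun τ => A (Function.update x 2 τ) i) = fun _ => A x i := by
        funext τ
        exact hco x _ (by simp [Function.update_apply]) (by simp [Function.update_apply]) i
      rw [he]; exact hasDerivAt_const _ _
    have upd3 : ∀ (x : Fin 4 → ℝ) (τ : ℝ),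
        (Function.update x 3 τ) 1 = x 1 ∧ (Function.update x 3 τ) 3 = τ := by
      intro x τ; constructor <;> simp [Function.update_apply]
    have hpd3_0 : ∀ x, pd 3 (fun y => A y 0) x
        = C1 (x 1) * (cos (x 3 / μ) * (1 / μ)) + C2 (x 1) * (-sin (x 3 / μ) * (1 / μ)) :=
      fun x => by
      refine pd_of_hasDerivAt (hAd 0) ?_
      have he : (fun τ => A (Function.update x 3 τ) 0)
          = fun τ => C1 (x 1) * sin (τ / μ) + C2 (x 1) * cos (τ / μ) := by
        funext τ
        rw [(hform _).1, (upd3 x τ).1, (upd3 x τ).2]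
      rw [he]
      exact ((hsin _).const_mul _).add ((hcos _).const_mul _)
    have hpd3_2 : ∀ x, pd 3 (fun y => A y 2) x
        = C1 (x 1) * (-sin (x 3 / μ) * (1 / μ)) - C2 (x 1) * (cos (x 3 / μ) * (1 / μ)) :=
      fun x => by
      refine pd_of_hasDerivAt (hAd 2) ?_
      have he : (fun τ => A (Function.update x 3 τ) 2)
          = fun τ => C1 (x 1) * cos (τ / μ) - C2 (x 1) * sin (τ / μ) := by
        funext τ
        rw [(hform _).2.1, (upd3 x τ).1, (upd3 x τ).2]
      rw [he]
      exact ((hcos _).const_mul _).sub ((hsin _).const_mul _)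
    have hpd3_1 : ∀ x, pd 3 (fun y => A y 1) x = 0 := fun x => by
      refine pd_of_hasDerivAt (hAd 1) ?_
      have he : (fun τ => A (Function.update x 3 τ) 1) = fun _ => f (x 1) := by
        funext τ; rw [(hform _).2.2.1, (upd3 x τ).1]
      rw [he]; exact hasDerivAt_const _ _
    have hpd3_3 : ∀ x, pd 3 (fun y => A y 3) x = 0 := fun x => by
      refine pd_of_hasDerivAt (hAd 3) ?_
      have he : (fun τ => A (Function.update x 3 τ) 3) = fun _ => g (x 1) := by
        funext τ; rw [(hform _).2.2.2, (upd3 x τ).1]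
      rw [he]; exact hasDerivAt_const _ _
    refine ⟨fun x i => ?_, fun x i => ?_, fun x i => ?_⟩
    · simp [lieCov, e1, Fin.sum_univ_four, pd_const, hpd0]
    · simp [lieCov, e3, Fin.sum_univ_four, pd_const, hpd2]
    · fin_cases i
      · simp only [lieCov, Fin.sum_univ_four]
        simp [pd_const, pd_proj, pd_neg_proj, hpd0, hpd2, hpd3_0, Pi.single_apply,
          (hform x).1, (hform x).2.1]
        field_simp
        ring
      · simp only [lieCov, Fin.sum_univ_four]
        simp [pd_const, pd_proj, pd_neg_proj, hpd0, hpd2, hpd3_1, Pi.single_apply]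
      · simp only [lieCov, Fin.sum_univ_four]
        simp [pd_const, pd_proj, pd_neg_proj, hpd0, hpd2, hpd3_2, Pi.single_apply,
          (hform x).1, (hform x).2.1]
        field_simp
        ring
      · simp only [lieCov, Fin.sum_univ_four]
        simp [pd_const, pd_proj, pd_neg_proj, hpd0, hpd2, hpd3_3, Pi.single_apply]
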